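/- With c_k = (N!/(2π)^{N/2})·Π_{j=1}^N Γ(1+k)/Γ(1+jk), the sequence c̃_k := c_k · (k/e)^{kN(N-1)/2} · Π_{j=1}^N j^{kj} converges to √(N!)/(2π)^{N/2} as k → ∞. -/

import Mathlib

open Finset Filter

noncomputable def cA (N : ℕ) (k : ℝ) : ℝ :=
  (N.factorial : ℝ) / (2 * Real.pi) ^ ((N : ℝ) / 2) *
    ∏ j ∈ Finset.range N, Real.Gamma (1 + k) / Real.Gamma (1 + ((j : ℝ) + 1) * k)

/-!
Stirling's formula `Γ(1 + x) ~ √(2πx) (x/e)^x` is carried over from factorials to real `x` by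
log-convexity of `Γ`: for `t ∈ [0, 1]` it gives `Γ(x + t) ≤ Γ(x) x^t` and
`Γ(x + 1) ≤ Γ(x + t) (x + t)^(1 - t)`, which squeeze `Γ(1 + x)` between the neighbouring factorials
up to factors tending to `1`. Replacing `Γ(1 + k)` and `Γ(1 + (j + 1) k)` by their approximants,
the powers of `k/e` and `j + 1` cancel exactly and leave the factor `1/√(j + 1)`; the product of
these factors over `j < N` is `1/√N!`.
-/

open Real Topology
open scoped Nat

noncomputable def stirlingApprox (x : ℝ) : ℝ := √(2 * x * π) * (x / exp 1) ^ x

lemma stirlingApprox_pos {x : ℝ} (hx : 0 < x) : 0 < stirlingApprox x := by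
  unfold stirlingApprox
  have := pi_pos
  positivity

lemma stirlingApprox_mul_rpow_sub_le {x y : ℝ} (hx : 0 < x) (hxy : x ≤ y) :
    stirlingApprox x * x ^ (y - x) ≤ stirlingApprox y := by
  have hy : 0 < y := hx.trans_le hxy
  -- `z ↦ y log z - z` is maximal at `z = y`
  have hlog : y * log x - x ≤ y * log y - y := by
    have h := log_le_sub_one_of_pos (div_pos hx hy)
    rw [log_div hx.ne' hy.ne'] at h
    calc y * log x - x = y * (log x - log y) + y * log y - x := by ring
      _ ≤ y * (x / y - 1) + y * log y - x := by gcongr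
      _ = y * log y - y := by field_simp; ring
  have hpow : (x / exp 1) ^ x * x ^ (y - x) ≤ (y / exp 1) ^ y := by
    rw [rpow_def_of_pos (div_pos hx (exp_pos 1)), rpow_def_of_pos hx,
      rpow_def_of_pos (div_pos hy (exp_pos 1)), ← exp_add, exp_le_exp,
      log_div hx.ne' (exp_pos 1).ne', log_div hy.ne' (exp_pos 1).ne', log_exp]
    linarith
  unfold stirlingApprox
  rw [mul_assoc]
  exact mul_le_mul (sqrt_le_sqrt (by gcongr)) hpow (by positivity) (sqrt_nonneg _)

lemma stirlingApprox_mul {c k : ℝ} (hc : 0 < c) (hk : 0 < k) :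
    stirlingApprox (c * k) =
      stirlingApprox k * √c * (k / exp 1) ^ (k * (c - 1)) * c ^ (k * c) := by
  have hke : 0 < k / exp 1 := by positivity
  unfold stirlingApprox
  rw [show 2 * (c * k) * π = 2 * k * π * c by ring, sqrt_mul (by positivity),
    mul_div_assoc, mul_rpow hc.le hke.le, mul_comm c k,
    show k * c = k * (c - 1) + k by ring, rpow_add hke]
  ring

lemma tendsto_factorial_div_stirlingApprox :
    Tendsto (fun n : ℕ => (n ! : ℝ) / stirlingApprox n) atTop (𝓝 1) := by
  have hne : ∀ᶠ n : ℕ in atTop, √(2 * n * π) * (n / exp 1) ^ n ≠ 0 := by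
    filter_upwards [eventually_gt_atTop 0] with n hn
    have := pi_pos
    positivity
  refine ((Asymptotics.isEquivalent_iff_tendsto_one hne).1
    Stirling.factorial_isEquivalent_stirling).congr fun n => ?_
  simp [stirlingApprox, rpow_natCast]

lemma Gamma_mul_add_mul_le_rpow_Gamma_mul_rpow_Gamma_of_nonneg {s t a b : ℝ}
    (hs : 0 ≤ s) (ht : 0 ≤ t) (hst : s + t = 1) (ha : 0 < a) (hb : 0 < b) :
    Gamma (s * a + t * b) ≤ Gamma a ^ s * Gamma b ^ t := by
  have h := convexOn_log_Gamma.2 (Set.mem_Ioi.2 ha) (Set.mem_Ioi.2 hb) hs ht hst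
  simp only [Function.comp_apply, smul_eq_mul] at h
  calc Gamma (s * a + t * b) ≤ exp (log (Gamma (s * a + t * b))) := le_exp_log _
    _ ≤ exp (s * log (Gamma a) + t * log (Gamma b)) := exp_le_exp.2 h
    _ = Gamma a ^ s * Gamma b ^ t := by
      rw [exp_add, rpow_def_of_pos (Gamma_pos_of_pos ha), rpow_def_of_pos (Gamma_pos_of_pos hb),
        mul_comm s, mul_comm t]

lemma rpow_mul_mul_rpow_of_add_eq_one {g y s t : ℝ} (hg : 0 < g) (hy : 0 ≤ y) (hst : s + t = 1) :
    g ^ s * (y * g) ^ t = g * y ^ t := by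
  rw [mul_rpow hy hg.le, mul_left_comm, ← rpow_add hg, hst, rpow_one, mul_comm]

lemma Gamma_add_le_Gamma_mul_rpow {x t : ℝ} (hx : 0 < x) (ht0 : 0 ≤ t) (ht1 : t ≤ 1) :
    Gamma (x + t) ≤ Gamma x * x ^ t := by
  have h := Gamma_mul_add_mul_le_rpow_Gamma_mul_rpow_Gamma_of_nonneg (sub_nonneg.2 ht1) ht0
    (sub_add_cancel 1 t) hx (by linarith : 0 < x + 1)
  rwa [show (1 - t) * x + t * (x + 1) = x + t by ring, Gamma_add_one hx.ne',
    rpow_mul_mul_rpow_of_add_eq_one (Gamma_pos_of_pos hx) hx.le (sub_add_cancel 1 t)] at h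

lemma Gamma_add_one_le_Gamma_add_mul_rpow {x t : ℝ} (hx : 0 < x) (ht0 : 0 ≤ t) (ht1 : t ≤ 1) :
    Gamma (x + 1) ≤ Gamma (x + t) * (x + t) ^ (1 - t) := by
  have hxt : 0 < x + t := by linarith
  have h := Gamma_mul_add_mul_le_rpow_Gamma_mul_rpow_Gamma_of_nonneg ht0 (sub_nonneg.2 ht1)
    (add_sub_cancel t 1) hxt (by linarith : 0 < x + t + 1)
  rwa [show t * (x + t) + (1 - t) * (x + t + 1) = x + 1 by ring, Gamma_add_one hxt.ne',
    rpow_mul_mul_rpow_of_add_eq_one (Gamma_pos_of_pos hxt) hxt.le (add_sub_cancel t 1)] at h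

lemma Gamma_one_add_div_stirlingApprox_le {n : ℕ} (hn : 0 < n) {x : ℝ} (hnx : n ≤ x)
    (hxn : x ≤ n + 1) :
    Gamma (1 + x) / stirlingApprox x ≤ n ! / stirlingApprox n * (1 + (n : ℝ)⁻¹) := by
  have hn' : (0 : ℝ) < n := by exact_mod_cast hn
  have hΓ : Gamma (1 + x) ≤ n ! * ((n : ℝ) + 1) ^ (x - n) := by
    have h := Gamma_add_le_Gamma_mul_rpow (by positivity : (0 : ℝ) < n + 1)
      (sub_nonneg.2 hnx) (by linarith : x - n ≤ 1)
    rwa [show (n : ℝ) + 1 + (x - n) = 1 + x by ring, Gamma_nat_eq_factorial] at h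
  have hS := stirlingApprox_mul_rpow_sub_le hn' hnx
  have hbase : 1 ≤ ((n : ℝ) + 1) / n := by rw [le_div_iff₀ hn']; linarith
  calc Gamma (1 + x) / stirlingApprox x
      ≤ n ! * ((n : ℝ) + 1) ^ (x - n) / (stirlingApprox n * (n : ℝ) ^ (x - n)) :=
        div_le_div₀ (by positivity) hΓ (by positivity [stirlingApprox_pos hn']) hS
    _ = n ! / stirlingApprox n * (((n : ℝ) + 1) / n) ^ (x - n) := by
        rw [div_rpow (by positivity) hn'.le, mul_div_mul_comm]
    _ ≤ n ! / stirlingApprox n * (1 + (n : ℝ)⁻¹) := by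
        gcongr
        · exact (div_pos (by positivity) (stirlingApprox_pos hn')).le
        · calc (((n : ℝ) + 1) / n) ^ (x - n) ≤ ((n : ℝ) + 1) / n :=
                rpow_le_self_of_one_le hbase (by linarith)
            _ = 1 + (n : ℝ)⁻¹ := by field_simp

lemma factorial_succ_div_stirlingApprox_le {n : ℕ} (hn : 0 < n) {x : ℝ} (hnx : n ≤ x)
    (hxn : x ≤ n + 1) :
    ((n + 1)! : ℝ) / stirlingApprox (n + 1) ≤
      Gamma (1 + x) / stirlingApprox x * (1 + (n : ℝ)⁻¹) := by
  have hn' : (0 : ℝ) < n := by exact_mod_cast hn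
  have hx : 0 < x := hn'.trans_le hnx
  have hΓ : ((n + 1)! : ℝ) ≤ Gamma (1 + x) * (1 + x) ^ ((n : ℝ) + 1 - x) := by
    have h := Gamma_add_one_le_Gamma_add_mul_rpow (by positivity : (0 : ℝ) < n + 1)
      (sub_nonneg.2 hnx) (by linarith : x - n ≤ 1)
    have hfac : Gamma ((n : ℝ) + 1 + 1) = (n + 1)! := by
      exact_mod_cast Gamma_nat_eq_factorial (n + 1)
    rwa [show (n : ℝ) + 1 + (x - n) = 1 + x by ring, show 1 - (x - n) = (n : ℝ) + 1 - x by ring,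
      hfac] at h
  have hS := stirlingApprox_mul_rpow_sub_le hx hxn
  have hbase : 1 ≤ (1 + x) / x := by rw [le_div_iff₀ hx]; linarith
  calc ((n + 1)! : ℝ) / stirlingApprox (n + 1)
      ≤ Gamma (1 + x) * (1 + x) ^ ((n : ℝ) + 1 - x) /
          (stirlingApprox x * x ^ ((n : ℝ) + 1 - x)) :=
        div_le_div₀ (by positivity [Gamma_pos_of_pos hx]) hΓ
          (by positivity [stirlingApprox_pos hx]) hS
    _ = Gamma (1 + x) / stirlingApprox x * ((1 + x) / x) ^ ((n : ℝ) + 1 - x) := by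
        rw [div_rpow (by positivity) hx.le, mul_div_mul_comm]
    _ ≤ Gamma (1 + x) / stirlingApprox x * (1 + (n : ℝ)⁻¹) := by
        gcongr
        · exact (div_pos (Gamma_pos_of_pos (by linarith)) (stirlingApprox_pos hx)).le
        · calc ((1 + x) / x) ^ ((n : ℝ) + 1 - x) ≤ (1 + x) / x :=
                rpow_le_self_of_one_le hbase (by linarith)
            _ = 1 + x⁻¹ := by field_simp; ring
            _ ≤ 1 + (n : ℝ)⁻¹ := by gcongr

theorem tendsto_Gamma_one_add_div_stirlingApprox :
    Tendsto (fun x => Gamma (1 + x) / stirlingApprox x) atTop (𝓝 1) := by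
  have hr : Tendsto (fun n : ℕ => 1 + (n : ℝ)⁻¹) atTop (𝓝 1) := by
    simpa using tendsto_inv_atTop_nhds_zero_nat.const_add (1 : ℝ)
  have hsucc : Tendsto (fun n : ℕ => ((n + 1)! : ℝ) / stirlingApprox (n + 1)) atTop (𝓝 1) :=
    (tendsto_factorial_div_stirlingApprox.comp (tendsto_add_atTop_nat 1)).congr fun n => by simp
  have hlo := (hsucc.div hr one_ne_zero).comp (tendsto_nat_floor_atTop (α := ℝ))
  have hhi := (tendsto_factorial_div_stirlingApprox.mul hr).comp (tendsto_nat_floor_atTop (α := ℝ))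
  rw [div_one] at hlo
  rw [one_mul] at hhi
  refine tendsto_of_tendsto_of_tendsto_of_le_of_le' hlo hhi ?_ ?_ <;>
  filter_upwards [eventually_ge_atTop 1] with x hx
  · exact (div_le_iff₀ (by positivity)).2 <| factorial_succ_div_stirlingApprox_le
      (Nat.floor_pos.2 hx) (Nat.floor_le (by linarith)) (Nat.lt_floor_add_one x).le
  · exact Gamma_one_add_div_stirlingApprox_le
      (Nat.floor_pos.2 hx) (Nat.floor_le (by linarith)) (Nat.lt_floor_add_one x).le

lemma tendsto_Gamma_div_Gamma_mul {c : ℝ} (hc : 0 < c) :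
    Tendsto (fun k => Gamma (1 + k) / Gamma (1 + c * k) *
      ((k / exp 1) ^ (k * (c - 1)) * c ^ (k * c))) atTop (𝓝 (√c)⁻¹) := by
  have h := (tendsto_Gamma_one_add_div_stirlingApprox.div
    (tendsto_Gamma_one_add_div_stirlingApprox.comp (tendsto_id.const_mul_atTop hc))
    one_ne_zero).div_const √c
  rw [div_one, one_div] at h
  refine h.congr' ?_
  filter_upwards [eventually_gt_atTop 0] with k hk
  have := stirlingApprox_pos hk
  have := Gamma_pos_of_pos (by positivity : 0 < 1 + c * k)
  simp only [Pi.div_apply, Function.comp_apply, id, stirlingApprox_mul hc hk]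
  field_simp

lemma prod_range_rpow_mul_natCast {b : ℝ} (hb : 0 < b) (k : ℝ) (N : ℕ) :
    ∏ j ∈ range N, b ^ (k * j) = b ^ (k * N * (N - 1) / 2) := by
  induction N with
  | zero => simp
  | succ n ih =>
    rw [prod_range_succ, ih, ← rpow_add hb]
    push_cast
    ring_nf

lemma factorial_mul_prod_inv_sqrt_succ (N : ℕ) :
    (N ! : ℝ) * ∏ j ∈ range N, (√((j : ℝ) + 1))⁻¹ = √(N ! : ℝ) := by
  rw [prod_inv_distrib, ← sqrt_prod _ fun j _ => by positivity, ← div_eq_mul_inv]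
  have : ∏ j ∈ range N, ((j : ℝ) + 1) = N ! := by
    exact_mod_cast prod_range_add_one_eq_factorial N
  rw [this, div_sqrt]

theorem stmt_17 (N : ℕ) :
    Tendsto
      (fun k : ℝ => cA N k * (k / Real.exp 1) ^ (k * N * (N - 1) / 2) *
        ∏ j ∈ Finset.range N, ((j : ℝ) + 1) ^ (k * ((j : ℝ) + 1)))
      atTop
      (nhds (Real.sqrt (N.factorial : ℝ) / (2 * Real.pi) ^ ((N : ℝ) / 2))) := by
  have hfactor : ∀ j ∈ range N, Tendsto (fun k => Gamma (1 + k) / Gamma (1 + ((j : ℝ) + 1) * k) *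
      ((k / exp 1) ^ (k * j) * ((j : ℝ) + 1) ^ (k * ((j : ℝ) + 1)))) atTop
      (𝓝 (√((j : ℝ) + 1))⁻¹) := fun j _ => by
    simpa using tendsto_Gamma_div_Gamma_mul (c := (j : ℝ) + 1) (by positivity)
  have h := (tendsto_finsetProd _ hfactor).const_mul ((N ! : ℝ) / (2 * π) ^ ((N : ℝ) / 2))
  rw [div_mul_eq_mul_div, factorial_mul_prod_inv_sqrt_succ] at h
  refine h.congr' ?_
  filter_upwards [eventually_gt_atTop 0] with k hk
  rw [cA, prod_mul_distrib, prod_mul_distrib, prod_range_rpow_mul_natCast (by positivity)]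
  ring
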